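/- For any natural number n and any integer p with 0 ≤ p ≤ n, the sum over k from p to n of C(n,k)·(n−2k) equals −p·C(n,p). -/

import Mathlib

/-! With `g k = k C(n, k)`, the identity `(k + 1) C(n, k + 1) = (n - k) C(n, k)` turns each summand
into `g (k + 1) - g k`, so the sum telescopes to `g (n + 1) - g p = -p C(n, p)`. -/

section

variable {R : Type*} [CommRing R]

theorem Nat.cast_succ_mul_choose_succ (n k : ℕ) :
    ((k : R) + 1) * n.choose (k + 1) = ((n : R) - k) * n.choose k := by
  rcases le_or_gt k n with hk | hk
  · have := congrArg (Nat.cast : ℕ → R) (Nat.choose_succ_right_eq n k)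
    push_cast [Nat.cast_sub hk] at this
    linear_combination this
  · simp [Nat.choose_eq_zero_of_lt hk, Nat.choose_eq_zero_of_lt (Nat.lt_succ_of_lt hk)]

theorem Nat.cast_choose_mul_sub_two_mul (n k : ℕ) :
    (n.choose k : R) * ((n : R) - 2 * k) =
      ((k + 1 : ℕ) : R) * n.choose (k + 1) - (k : R) * n.choose k := by
  push_cast
  linear_combination -Nat.cast_succ_mul_choose_succ (R := R) n k

end

theorem stmt_0 (n p : ℕ) (hp : p ≤ n) :
    ∑ k ∈ Finset.Icc p n, (n.choose k : ℤ) * ((n : ℤ) - 2 * k) =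
      -(p : ℤ) * (n.choose p : ℤ) := by
  simp_rw [Nat.cast_choose_mul_sub_two_mul]
  rw [Finset.sum_Icc_sub (by omega) fun k => (k : ℤ) * n.choose k,
    Nat.choose_succ_self, Nat.cast_zero, mul_zero, zero_sub, neg_mul]
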